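/- In any (n+1)-valued Kripke model, for every world w, program α, and formulas φ, ψ: Val(w, [α]φ) ⊙ Val(w, ⟨α⟩ψ) ≤ Val(w, ⟨α⟩(φ ⊙ ψ)) ≤ Val(w, ⟨α⟩φ) ⊙ Val(w, ⟨α⟩ψ), where ⟨α⟩χ abbreviates ¬[α]¬χ and ⊙ is Łukasiewicz strong conjunction. -/

import Mathlib

/-! Both inequalities follow from monotonicity of `⊙` in each argument. For the lower one, the
supremum defining `⟨α⟩ψ` is attained (the values lie in the finite chain `Łn`) at some successor
`u`, or is the empty supremum `0`; at `u`, `[α]φ ≤ φ u`. -/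

noncomputable def lneg (x : ℝ) : ℝ := 1 - x
noncomputable def limp (x y : ℝ) : ℝ := min (1 - x + y) 1
noncomputable def lcon (x y : ℝ) : ℝ := max (x + y - 1) 0
noncomputable def ldis (x y : ℝ) : ℝ := min (x + y) 1
noncomputable def lpow (x : ℝ) : ℕ → ℝ
  | 0 => 1
  | k+1 => lcon x (lpow x k)

/-- The finite Lukasiewicz chain Ln = {i/n : 0 <= i <= n} as a subset of R. -/
def Luk (n : ℕ) : Set ℝ := {x | ∃ i : ℕ, i ≤ n ∧ x = (i : ℝ) / n}

/-- Value of [a]phi at w: infimum of values at a-successors (empty inf = 1). -/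
noncomputable def lbox {W : Type*} (R : W → W → Prop) (v : W → ℝ) (w : W) : ℝ :=
  sInf (insert 1 (v '' {u | R w u}))

/-- Value of <a>phi at w: supremum of values at a-successors (empty sup = 0). -/
noncomputable def ldia {W : Type*} (R : W → W → Prop) (v : W → ℝ) (w : W) : ℝ :=
  sSup (insert 0 (v '' {u | R w u}))


theorem Luk_finite (n : ℕ) : (Luk n).Finite :=
  ((Set.finite_Iic n).image fun i : ℕ => (i : ℝ) / n).subset fun _ ⟨i, hi, hx⟩ => ⟨i, hi, hx.symm⟩

theorem lcon_mono {a b c d : ℝ} (hac : a ≤ c) (hbd : b ≤ d) : lcon a b ≤ lcon c d :=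
  max_le_max (by linarith) le_rfl

theorem lcon_zero_right {a : ℝ} (ha : a ≤ 1) : lcon a 0 = 0 :=
  max_eq_right (by linarith)

section Modal

variable {W : Type*} {R : W → W → Prop} {v : W → ℝ} {w : W}

theorem lbox_le_one (hv : BddBelow (Set.range v)) : lbox R v w ≤ 1 :=
  csInf_le ((hv.mono (Set.image_subset_range _ _)).insert 1) (Set.mem_insert _ _)

theorem lbox_le {u : W} (hv : BddBelow (Set.range v)) (hu : R w u) : lbox R v w ≤ v u :=
  csInf_le ((hv.mono (Set.image_subset_range _ _)).insert 1)
    (Set.mem_insert_of_mem _ ⟨u, hu, rfl⟩)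

theorem ldia_nonneg (hv : BddAbove (Set.range v)) : 0 ≤ ldia R v w :=
  le_csSup ((hv.mono (Set.image_subset_range _ _)).insert 0) (Set.mem_insert _ _)

theorem le_ldia {u : W} (hv : BddAbove (Set.range v)) (hu : R w u) : v u ≤ ldia R v w :=
  le_csSup ((hv.mono (Set.image_subset_range _ _)).insert 0)
    (Set.mem_insert_of_mem _ ⟨u, hu, rfl⟩)

theorem ldia_le {c : ℝ} (hc : 0 ≤ c) (h : ∀ u, R w u → v u ≤ c) : ldia R v w ≤ c :=
  csSup_le (Set.insert_nonempty _ _) <| by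
    rintro x (rfl | ⟨u, hu, rfl⟩)
    exacts [hc, h u hu]

theorem ldia_eq_zero_or_exists_eq (hv : (Set.range v).Finite) :
    ldia R v w = 0 ∨ ∃ u, R w u ∧ v u = ldia R v w := by
  have hfin : (insert 0 (v '' {u | R w u})).Finite :=
    (hv.subset (Set.image_subset_range _ _)).insert 0
  rcases (Set.insert_nonempty _ _).csSup_mem hfin with h | ⟨u, hu, h⟩
  exacts [Or.inl h, Or.inr ⟨u, hu, h⟩]

end Modal

theorem stmt13_general {W : Type*} (n : ℕ) (R : W → W → Prop)
    (f g : W → ℝ) (hf : ∀ u, f u ∈ Luk n) (hg : ∀ u, g u ∈ Luk n) (w : W) :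
    lcon (lbox R f w) (ldia R g w) ≤ ldia R (fun u => lcon (f u) (g u)) w ∧
    ldia R (fun u => lcon (f u) (g u)) w ≤ lcon (ldia R f w) (ldia R g w) := by
  have hf_fin : (Set.range f).Finite := (Luk_finite n).subset (Set.range_subset_iff.2 hf)
  have hg_fin : (Set.range g).Finite := (Luk_finite n).subset (Set.range_subset_iff.2 hg)
  have hfg_fin : (Set.range fun u => lcon (f u) (g u)).Finite :=
    ((Luk_finite n).image2 lcon (Luk_finite n)).subset <|
      Set.range_subset_iff.2 fun u => Set.mem_image2_of_mem (hf u) (hg u)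
  constructor
  · rcases ldia_eq_zero_or_exists_eq (R := R) (w := w) hg_fin with h0 | ⟨u, hu, hgu⟩
    · rw [h0, lcon_zero_right (lbox_le_one hf_fin.bddBelow)]
      exact ldia_nonneg hfg_fin.bddAbove
    · calc lcon (lbox R f w) (ldia R g w) = lcon (lbox R f w) (g u) := by rw [hgu]
        _ ≤ lcon (f u) (g u) := lcon_mono (lbox_le hf_fin.bddBelow hu) le_rfl
        _ ≤ _ := le_ldia (v := fun u => lcon (f u) (g u)) hfg_fin.bddAbove hu
  · exact ldia_le (le_max_right _ _) fun u hu =>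
      lcon_mono (le_ldia hf_fin.bddAbove hu) (le_ldia hg_fin.bddAbove hu)

theorem stmt13 {W : Type*} (n : ℕ) (hn : 1 ≤ n) (R : W → W → Prop)
    (f g : W → ℝ) (hf : ∀ u, f u ∈ Luk n) (hg : ∀ u, g u ∈ Luk n) (w : W) :
    lcon (lbox R f w) (ldia R g w) ≤ ldia R (fun u => lcon (f u) (g u)) w ∧
    ldia R (fun u => lcon (f u) (g u)) w ≤ lcon (ldia R f w) (ldia R g w) :=
  stmt13_general n R f g hf hg w
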